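/- arXiv:2207.08460 — 2 statements merged into one kernel-verified Lean document; each statement's English description precedes it below -/
import Mathlib

section
/- Let λ₁,…,λ_k be non-zero complex numbers, ε ∈ ℂ, and α = (α₁,…,α_k) a multi-index. Order multi-indices of equal total degree lexicographically (β ≺ α iff β_i < α_i at the smallest index i where they differ). Then in the expansion of ∏_{l=1}^{k−1}(λ_l z_l + ε z_{l+1})^{α_l} · (λ_k z_k)^{α_k} − ∏_{l=1}^{k}(λ_l z_l)^{α_l} as a linear combination of monomials z^β, every monomial z^β appearing with non-zero coefficient satisfies |β| = |α| and β ≺ α (strictly smaller in lexicographic order). -/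
/-!
For the lexicographic monomial order, in which `X 0 > X 1 > ⋯ > X n`, the leading term of
`λ_l X_l + ε X_{l+1}` is `λ_l X_l` because `λ_l ≠ 0`. Over a domain leading terms are
multiplicative, so the leading term of the composed monomial is `∏ (λ_i X_i)^{α_i}`, and
subtracting it leaves only monomials strictly below `α`. Both polynomials are homogeneous of
degree `|α|`, which gives the statement about total degrees.
-/

open MvPolynomial

namespace MonomialOrder

variable {σ R : Type*}

section CommSemiring

variable [CommSemiring R] (m : MonomialOrder σ)

theorem leadingTerm_add_of_lt {f g : MvPolynomial σ R} (h : m.degree g ≺[m] m.degree f) :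
    m.leadingTerm (f + g) = m.leadingTerm f := by
  rw [leadingTerm, leadingTerm, m.degree_add_of_lt h, m.leadingCoeff_add_of_lt h]

theorem leadingTerm_C_mul_X (a : R) (i : σ) : m.leadingTerm (C a * X i) = C a * X i := by
  rw [C_mul_X_eq_monomial, leadingTerm_monomial]

@[simps]
noncomputable def leadingTermHom [NoZeroDivisors R] : MvPolynomial σ R →* MvPolynomial σ R where
  toFun := m.leadingTerm
  map_one' := by simpa using m.leadingTerm_C (1 : R)
  map_mul' := m.leadingTerm_mul

theorem degree_prod_C_mul_X_pow [Fintype σ] [IsDomain R] {c : σ → R} (hc : ∀ i, c i ≠ 0)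
    (α : σ → ℕ) :
    m.degree (∏ i, (C (c i) * X i) ^ α i) = Finsupp.equivFunOnFinite.symm α := by
  classical
  rw [m.degree_prod fun i _ => pow_ne_zero _ (mul_ne_zero (C_ne_zero.2 (hc i)) (X_ne_zero i))]
  ext j
  simp [m.degree_pow, C_mul_X_eq_monomial, m.degree_monomial, hc, Finsupp.single_apply]

theorem lex_leadingTerm_C_mul_X_add_C_mul_X [LinearOrder σ] [WellFoundedGT σ] {i j : σ}
    (hij : i < j) {a : R} (ha : a ≠ 0) (b : R) :
    lex.leadingTerm (C a * X i + C b * X j) = C a * X i := by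
  classical
  have hlt : lex.degree (C b * X j) ≺[lex] lex.degree (C a * X i) := by
    rw [C_mul_X_eq_monomial, C_mul_X_eq_monomial, lex.degree_monomial a, if_neg ha]
    exact (lex.degree_monomial_le b).trans_lt (Finsupp.Lex.single_lt_iff.2 hij)
  rw [lex.leadingTerm_add_of_lt hlt, leadingTerm_C_mul_X]

end CommSemiring

theorem toSyn_lt_of_mem_support_sub_leadingTerm [CommRing R] (m : MonomialOrder σ)
    {f : MvPolynomial σ R} {d : σ →₀ ℕ} (hd : d ∈ (f - m.leadingTerm f).support) :
    m.toSyn d < m.toSyn (m.degree f) := by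
  have hne : d ≠ m.degree f := by
    rintro rfl
    classical
    simp [leadingTerm, leadingCoeff, coeff_monomial] at hd
  exact ((m.le_degree hd).trans (m.degree_sub_leadingTerm_le f)).lt_of_ne
    (m.toSyn.injective.ne hne)

end MonomialOrder

theorem MvPolynomial.isHomogeneous_prod_C_mul_X_pow {σ R : Type*} [CommSemiring R] [Fintype σ]
    (c : σ → R) (α : σ → ℕ) :
    (∏ i, (C (c i) * X i) ^ α i).IsHomogeneous (∑ i, α i) := by
  simpa only [mul_pow, ← C_pow] using
    IsHomogeneous.prod _ _ _ fun i _ => isHomogeneous_C_mul_X_pow (c i ^ α i) i (α i)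

section JordanBlock

variable {R : Type*} [CommSemiring R] {n : ℕ}

/-- `z^α ∘ (Λ + εN)` for the Jordan block with diagonal `lam`. -/
noncomputable def monomialCompJordan (lam : Fin (n + 1) → R) (ε : R) (α : Fin (n + 1) → ℕ) :
    MvPolynomial (Fin (n + 1)) R :=
  (∏ l : Fin n, (C (lam l.castSucc) * X l.castSucc + C ε * X l.succ) ^ α l.castSucc) *
    (C (lam (Fin.last n)) * X (Fin.last n)) ^ α (Fin.last n)

theorem isHomogeneous_monomialCompJordan (lam : Fin (n + 1) → R) (ε : R)
    (α : Fin (n + 1) → ℕ) :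
    (monomialCompJordan lam ε α).IsHomogeneous (∑ i, α i) := by
  have hlin : ∀ l : Fin n,
      (C (lam l.castSucc) * X l.castSucc + C ε * X l.succ).IsHomogeneous 1 := fun l =>
    (isHomogeneous_C_mul_X _ _).add (isHomogeneous_C_mul_X _ _)
  have h := (IsHomogeneous.prod Finset.univ _ _ fun l _ => (hlin l).pow (α l.castSucc)).mul
    ((isHomogeneous_C_mul_X (lam (Fin.last n)) (Fin.last n)).pow (α (Fin.last n)))
  rw [monomialCompJordan]
  simpa only [one_mul, ← Fin.sum_univ_castSucc] using h

theorem lex_leadingTerm_monomialCompJordan [NoZeroDivisors R] {lam : Fin (n + 1) → R}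
    (hlam : ∀ i, lam i ≠ 0) (ε : R) (α : Fin (n + 1) → ℕ) :
    MonomialOrder.lex.leadingTerm (monomialCompJordan lam ε α) =
      ∏ i, (C (lam i) * X i) ^ α i := by
  rw [Fin.prod_univ_castSucc, monomialCompJordan, ← MonomialOrder.leadingTermHom_apply, map_mul,
    map_prod, map_pow]
  simp only [map_pow, MonomialOrder.leadingTermHom_apply, MonomialOrder.leadingTerm_C_mul_X,
    MonomialOrder.lex_leadingTerm_C_mul_X_add_C_mul_X Fin.castSucc_lt_succ (hlam _)]

end JordanBlock

open MvPolynomial in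
/-- The remainder of the composition of a monomial `z^α` with a Jordan block:
every monomial `z^β` appearing with non-zero coefficient in
`∏_{l<k}(λ_l z_l + ε z_{l+1})^{α_l} (λ_k z_k)^{α_k} - ∏_l (λ_l z_l)^{α_l}`
has the same total degree as `α` and is strictly smaller than `α` in the
lexicographic order. -/
theorem stmt18 (n : ℕ) (lam : Fin (n + 1) → ℂ) (hlam : ∀ i, lam i ≠ 0)
    (ε : ℂ) (α : Fin (n + 1) → ℕ) :
    ∀ β : Fin (n + 1) →₀ ℕ,
      MvPolynomial.coeff β
        ((∏ l : Fin n,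
            (C (lam l.castSucc) * X l.castSucc + C ε * X l.succ) ^ α l.castSucc) *
          (C (lam (Fin.last n)) * X (Fin.last n)) ^ α (Fin.last n)
        - ∏ i : Fin (n + 1), (C (lam i) * X i) ^ α i) ≠ 0 →
      (∑ i, β i) = (∑ i, α i) ∧
        ∃ i : Fin (n + 1), (∀ j, j < i → β j = α j) ∧ β i < α i := by
  intro β hβ
  change coeff β (monomialCompJordan lam ε α - _) ≠ 0 at hβ
  constructor
  · rw [← Finsupp.degree_eq_sum, Finsupp.degree_eq_weight_one]
    exact ((isHomogeneous_monomialCompJordan lam ε α).sub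
      (isHomogeneous_prod_C_mul_X_pow lam α)) hβ
  · rw [← lex_leadingTerm_monomialCompJordan hlam] at hβ
    have hlt := MonomialOrder.lex.toSyn_lt_of_mem_support_sub_leadingTerm (mem_support_iff.2 hβ)
    rw [← MonomialOrder.degree_leadingTerm, lex_leadingTerm_monomialCompJordan hlam,
      MonomialOrder.degree_prod_C_mul_X_pow _ hlam, MonomialOrder.lex_lt_iff] at hlt
    exact Finsupp.Lex.lt_iff.1 hlt
end

section
/- Let φ be holomorphic on the polydisc B_{r} ⊂ ℂⁿ vanishing to order ≥ 2 at 0, with finite majorant norm |φ|_r. Let Λ = diag(λ₁,…,λ_n) and N the nilpotent part of a Jordan form, where all variables acted on non-trivially by N correspond to eigenvalues of modulus μ < 1, and assume ε < (1−μ)/2. Then there is a constant C̃ depending only on n and μ (not on r, ε, or φ) such that |φ∘(Λ + εN) − φ∘Λ|_r ≤ ε · C̃ · |φ|_r. -/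
/-!
The majorant norm `|p|_r = ∑_β |p_β| r^|β|` is a submultiplicative seminorm on polynomials, so
telescoping gives `|∏ f_i - ∏ g_i|_r ≤ k θ c^k` for `k` factors with `|f_i|_r, |g_i|_r ≤ c` and
`|f_i - g_i|_r ≤ θ c`. For a monomial `z^α` of degree `k`, taking `f = (Λ + εN) z`, `g = Λ z`,
`c = (μ + ε) r` and `θ c = ε r` gives
`|((Λ + εN) z)^α - (Λ z)^α|_r ≤ ε k (μ + ε)^(k-1) r^k ≤ ε r^k / (1 - μ - ε) ≤ (2 / (1 - μ)) ε r^k`.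
Summing over the Taylor coefficients of `φ`, where every rearrangement is justified by
absolute convergence, gives the estimate with `C̃ = 2 / (1 - μ)`.
-/

open MvPolynomial Finset

namespace MvPolynomial

variable {σ R : Type*} [NormedCommRing R] {r : ℝ}

noncomputable def majorantNorm (r : ℝ) (p : MvPolynomial σ R) : ℝ :=
  ∑ β ∈ p.support, ‖coeff β p‖ * r ^ β.degree

lemma majorantNorm_nonneg (hr : 0 ≤ r) (p : MvPolynomial σ R) : 0 ≤ majorantNorm r p :=
  sum_nonneg fun _ _ => by positivity

lemma majorantNorm_eq_tsum (p : MvPolynomial σ R) :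
    majorantNorm r p = ∑' β, ‖coeff β p‖ * r ^ β.degree :=
  (tsum_eq_sum fun β hβ => by simp [notMem_support_iff.mp hβ]).symm

lemma summable_norm_coeff_mul_pow (p : MvPolynomial σ R) :
    Summable fun β => ‖coeff β p‖ * r ^ β.degree :=
  summable_of_ne_finset_zero (s := p.support) fun β hβ => by simp [notMem_support_iff.mp hβ]

lemma sum_norm_coeff_mul_pow_le (hr : 0 ≤ r) (p : MvPolynomial σ R) (s : Finset (σ →₀ ℕ)) :
    ∑ β ∈ s, ‖coeff β p‖ * r ^ β.degree ≤ majorantNorm r p := by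
  rw [majorantNorm_eq_tsum]
  exact (summable_norm_coeff_mul_pow p).sum_le_tsum s fun _ _ => by positivity

lemma majorantNorm_monomial (d : σ →₀ ℕ) (c : R) :
    majorantNorm r (monomial d c) = ‖c‖ * r ^ d.degree := by
  classical
  by_cases hc : c = 0
  · simp [hc, majorantNorm]
  · simp [majorantNorm, support_monomial, hc]

lemma majorantNorm_C_mul_X (c : R) (i : σ) : majorantNorm r (C c * X i) = ‖c‖ * r := by
  rw [C_mul_X_eq_monomial, majorantNorm_monomial, Finsupp.degree_single, pow_one]

lemma majorantNorm_one [NormOneClass R] : majorantNorm r (1 : MvPolynomial σ R) = 1 := by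
  simpa using majorantNorm_monomial (σ := σ) (r := r) 0 (1 : R)

lemma majorantNorm_add_le (hr : 0 ≤ r) (p q : MvPolynomial σ R) :
    majorantNorm r (p + q) ≤ majorantNorm r p + majorantNorm r q := by
  simp only [majorantNorm_eq_tsum]
  rw [← (summable_norm_coeff_mul_pow p).tsum_add (summable_norm_coeff_mul_pow q)]
  refine (summable_norm_coeff_mul_pow _).tsum_le_tsum (fun β => ?_)
    ((summable_norm_coeff_mul_pow p).add (summable_norm_coeff_mul_pow q))
  rw [coeff_add, ← add_mul]
  gcongr
  exact norm_add_le _ _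

lemma majorantNorm_sum_le (hr : 0 ≤ r) {ι : Type*} (s : Finset ι) (f : ι → MvPolynomial σ R) :
    majorantNorm r (∑ i ∈ s, f i) ≤ ∑ i ∈ s, majorantNorm r (f i) :=
  le_sum_of_subadditive _ (by simp [majorantNorm]) (majorantNorm_add_le hr) s f

lemma majorantNorm_mul_le (hr : 0 ≤ r) (p q : MvPolynomial σ R) :
    majorantNorm r (p * q) ≤ majorantNorm r p * majorantNorm r q := by
  conv_lhs => rw [p.as_sum, q.as_sum, sum_mul_sum]
  calc _ ≤ ∑ β ∈ p.support, ∑ γ ∈ q.support,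
        majorantNorm r (monomial β (coeff β p) * monomial γ (coeff γ q)) :=
        (majorantNorm_sum_le hr _ _).trans (sum_le_sum fun β _ => majorantNorm_sum_le hr _ _)
    _ ≤ majorantNorm r p * majorantNorm r q := by
      rw [majorantNorm, majorantNorm, sum_mul_sum]
      refine sum_le_sum fun β _ => sum_le_sum fun γ _ => ?_
      rw [monomial_mul, majorantNorm_monomial, map_add, pow_add]
      calc _ ≤ ‖coeff β p‖ * ‖coeff γ q‖ * (r ^ β.degree * r ^ γ.degree) := by
            gcongr; exact norm_mul_le _ _
        _ = _ := by ring

variable {ι : Type*}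

lemma tsum_norm_mul_pow_degree_le_of_hasSum (hr : 0 < r) {a : ι → R}
    {P : ι → MvPolynomial σ R} {b : (σ →₀ ℕ) → R}
    (hb : ∀ β, HasSum (fun α => a α * coeff β (P α)) (b β)) {w : ι → ℝ} (hw : Summable w)
    (hPw : ∀ α, ‖a α‖ * majorantNorm r (P α) ≤ w α) :
    ∑' β, ‖b β‖ * r ^ β.degree ≤ ∑' α, w α := by
  have hterm (α : ι) (S : Finset (σ →₀ ℕ)) :
      ∑ β ∈ S, ‖a α * coeff β (P α)‖ * r ^ β.degree ≤ w α :=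
    calc _ ≤ ∑ β ∈ S, ‖a α‖ * (‖coeff β (P α)‖ * r ^ β.degree) := by
          refine sum_le_sum fun β _ => ?_
          rw [← mul_assoc]
          gcongr
          exact norm_mul_le _ _
      _ ≤ ‖a α‖ * majorantNorm r (P α) := by
          rw [← mul_sum]; gcongr; exact sum_norm_coeff_mul_pow_le hr.le _ S
      _ ≤ w α := hPw α
  have hsummable (β : σ →₀ ℕ) : Summable fun α => ‖a α * coeff β (P α)‖ * r ^ β.degree :=
    hw.of_nonneg_of_le (fun _ => by positivity) fun α => by simpa using hterm α {β}
  have hb_le (β : σ →₀ ℕ) :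
      ‖b β‖ * r ^ β.degree ≤ ∑' α, ‖a α * coeff β (P α)‖ * r ^ β.degree := by
    have hnorm : Summable fun α => ‖a α * coeff β (P α)‖ := by
      simpa [mul_div_cancel_right₀ _ (pow_pos hr β.degree).ne'] using
        (hsummable β).div_const (r ^ β.degree)
    rw [tsum_mul_right, ← (hb β).tsum_eq]
    gcongr
    exact norm_tsum_le_tsum_norm hnorm
  refine Real.tsum_le_of_sum_le (fun β => by positivity) fun S => ?_
  calc _ ≤ ∑ β ∈ S, ∑' α, ‖a α * coeff β (P α)‖ * r ^ β.degree := sum_le_sum fun β _ => hb_le β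
    _ = ∑' α, ∑ β ∈ S, ‖a α * coeff β (P α)‖ * r ^ β.degree :=
        (Summable.tsum_finsetSum fun β _ => hsummable β).symm
    _ ≤ ∑' α, w α :=
        (summable_sum fun β _ => hsummable β).tsum_le_tsum (fun α => hterm α S) hw

variable [NormOneClass R] {c θ : ℝ}

lemma majorantNorm_prod_le_pow (hr : 0 ≤ r) {s : Finset ι} {f : ι → MvPolynomial σ R}
    (hf : ∀ i ∈ s, majorantNorm r (f i) ≤ c) : majorantNorm r (∏ i ∈ s, f i) ≤ c ^ #s := by
  induction s using Finset.cons_induction with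
  | empty => simp [majorantNorm_one]
  | cons a s has ih =>
    have hfa := hf a (mem_cons_self a s)
    rw [prod_cons, card_cons, pow_succ']
    exact (majorantNorm_mul_le hr _ _).trans <| mul_le_mul hfa
      (ih fun i hi => hf i (mem_cons_of_mem hi)) (majorantNorm_nonneg hr _)
      ((majorantNorm_nonneg hr _).trans hfa)

lemma majorantNorm_prod_sub_prod_le (hr : 0 ≤ r) {s : Finset ι} {f g : ι → MvPolynomial σ R}
    (hf : ∀ i ∈ s, majorantNorm r (f i) ≤ c) (hg : ∀ i ∈ s, majorantNorm r (g i) ≤ c)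
    (hfg : ∀ i ∈ s, majorantNorm r (f i - g i) ≤ θ * c) :
    majorantNorm r (∏ i ∈ s, f i - ∏ i ∈ s, g i) ≤ #s * θ * c ^ #s := by
  induction s using Finset.cons_induction with
  | empty => simp [majorantNorm]
  | cons a s has ih =>
    simp only [mem_cons, forall_eq_or_imp] at hf hg hfg
    have hc : 0 ≤ c := (majorantNorm_nonneg hr _).trans hf.1
    have hθc : 0 ≤ θ * c := (majorantNorm_nonneg hr _).trans hfg.1
    have hsplit : ∏ i ∈ cons a s has, f i - ∏ i ∈ cons a s has, g i =
        f a * (∏ i ∈ s, f i - ∏ i ∈ s, g i) + (f a - g a) * ∏ i ∈ s, g i := by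
      rw [prod_cons, prod_cons]; ring
    calc _ ≤ majorantNorm r (f a) * majorantNorm r (∏ i ∈ s, f i - ∏ i ∈ s, g i) +
          majorantNorm r (f a - g a) * majorantNorm r (∏ i ∈ s, g i) := by
          rw [hsplit]
          exact (majorantNorm_add_le hr _ _).trans
            (add_le_add (majorantNorm_mul_le hr _ _) (majorantNorm_mul_le hr _ _))
      _ ≤ c * (#s * θ * c ^ #s) + θ * c * c ^ #s := by
          gcongr
          · exact majorantNorm_nonneg hr _
          · exact hf.1
          · exact ih hf.2 hg.2 hfg.2
          · exact majorantNorm_nonneg hr _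
          · exact hfg.1
          · exact majorantNorm_prod_le_pow hr hg.2
      _ = #(cons a s has) * θ * c ^ #(cons a s has) := by
          rw [card_cons, pow_succ]; push_cast; ring

lemma majorantNorm_prod_pow_sub_prod_pow_le (hr : 0 ≤ r) {s : Finset ι}
    {f g : ι → MvPolynomial σ R} (k : ι → ℕ)
    (hf : ∀ i ∈ s, majorantNorm r (f i) ≤ c) (hg : ∀ i ∈ s, majorantNorm r (g i) ≤ c)
    (hfg : ∀ i ∈ s, majorantNorm r (f i - g i) ≤ θ * c) :
    majorantNorm r (∏ i ∈ s, f i ^ k i - ∏ i ∈ s, g i ^ k i) ≤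
      (∑ i ∈ s, k i) * θ * c ^ ∑ i ∈ s, k i := by
  have hprod (h : ι → MvPolynomial σ R) :
      ∏ i ∈ s, h i ^ k i = ∏ x ∈ s.sigma fun i => range (k i), h x.1 := by
    simp [prod_sigma]
  have hcard : #(s.sigma fun i => range (k i)) = ∑ i ∈ s, k i := by simp [card_sigma]
  rw [hprod, hprod, ← hcard]
  exact majorantNorm_prod_sub_prod_le hr (fun x hx => hf x.1 (mem_sigma.1 hx).1)
    (fun x hx => hg x.1 (mem_sigma.1 hx).1) fun x hx => hfg x.1 (mem_sigma.1 hx).1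

end MvPolynomial

lemma natCast_mul_pow_le_div_one_sub {t : ℝ} (h0 : 0 ≤ t) (h1 : t < 1) (k : ℕ) :
    k * t ^ k ≤ t / (1 - t) :=
  calc (k : ℝ) * t ^ k = ∑ _i ∈ Ico 1 (k + 1), t ^ k := by simp
    _ ≤ ∑ i ∈ Ico 1 (k + 1), t ^ i := sum_le_sum fun i hi =>
        pow_le_pow_of_le_one h0 h1.le (by rw [mem_Ico] at hi; omega)
    _ ≤ t / (1 - t) := by simpa using geom_sum_Ico_le_of_lt_one (m := 1) (n := k + 1) h0 h1

section JordanBlock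

variable {R : Type*} [NormedCommRing R] {n : ℕ}

/-- The components of `(Λ + εN) z` for a single Jordan block. -/
noncomputable def jordanSubst (lam : Fin (n + 1) → R) (ε : R) :
    Fin (n + 1) → MvPolynomial (Fin (n + 1)) R :=
  Fin.snoc (fun l : Fin n => C (lam l.castSucc) * X l.castSucc + C ε * X l.succ)
    (C (lam (Fin.last n)) * X (Fin.last n))

lemma prod_jordanSubst_pow (lam : Fin (n + 1) → R) (ε : R) (k : Fin (n + 1) → ℕ) :
    ∏ i, jordanSubst lam ε i ^ k i =
      (∏ l : Fin n, (C (lam l.castSucc) * X l.castSucc + C ε * X l.succ) ^ k l.castSucc) *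
        (C (lam (Fin.last n)) * X (Fin.last n)) ^ k (Fin.last n) := by
  simp [Fin.prod_univ_castSucc, jordanSubst]

variable [NormOneClass R] {r μ e : ℝ} {lam : Fin (n + 1) → R} {ε : R}

lemma majorantNorm_prod_jordanSubst_pow_sub_le (hr : 0 ≤ r) (hμ : 0 ≤ μ) (he : 0 < e)
    (hlam : ∀ i, ‖lam i‖ ≤ μ) (hε : ‖ε‖ ≤ e) (k : Fin (n + 1) → ℕ) :
    majorantNorm r (∏ i, jordanSubst lam ε i ^ k i - ∏ i, (C (lam i) * X i) ^ k i) ≤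
      (∑ i, k i) * (e / (μ + e)) * ((μ + e) * r) ^ ∑ i, k i := by
  have hdiag (i : Fin (n + 1)) : majorantNorm r (C (lam i) * X i) ≤ (μ + e) * r := by
    rw [majorantNorm_C_mul_X]; gcongr; linarith [hlam i]
  refine majorantNorm_prod_pow_sub_prod_pow_le hr k (fun i _ => ?_) (fun i _ => hdiag i)
    (fun i _ => ?_)
  · induction i using Fin.lastCases with
    | last => simpa [jordanSubst] using hdiag (Fin.last n)
    | cast l =>
      simp only [jordanSubst, Fin.snoc_castSucc]
      refine (majorantNorm_add_le hr _ _).trans ?_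
      rw [majorantNorm_C_mul_X, majorantNorm_C_mul_X, ← add_mul]
      gcongr
      exact hlam _
  · rw [show e / (μ + e) * ((μ + e) * r) = e * r by field_simp]
    induction i using Fin.lastCases with
    | last => simpa [jordanSubst, majorantNorm] using mul_nonneg he.le hr
    | cast l =>
      simp only [jordanSubst, Fin.snoc_castSucc, add_sub_cancel_left, majorantNorm_C_mul_X]
      gcongr

lemma majorantNorm_prod_jordanSubst_pow_sub_le_uniform (hr : 0 ≤ r) (hμ : 0 ≤ μ) (he : 0 < e)
    (hμe : μ + e < 1) (hlam : ∀ i, ‖lam i‖ ≤ μ) (hε : ‖ε‖ ≤ e) (k : Fin (n + 1) → ℕ) :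
    majorantNorm r (∏ i, jordanSubst lam ε i ^ k i - ∏ i, (C (lam i) * X i) ^ k i) ≤
      e / (1 - (μ + e)) * r ^ ∑ i, k i := by
  have ht : 0 < μ + e := by positivity
  calc _ ≤ (∑ i, k i) * (e / (μ + e)) * ((μ + e) * r) ^ ∑ i, k i :=
        majorantNorm_prod_jordanSubst_pow_sub_le hr hμ he hlam hε k
    _ = e / (μ + e) * ((∑ i, k i : ℕ) * (μ + e) ^ ∑ i, k i) * r ^ ∑ i, k i := by
        rw [mul_pow]; push_cast; ring
    _ ≤ e / (μ + e) * ((μ + e) / (1 - (μ + e))) * r ^ ∑ i, k i := by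
        gcongr; exact natCast_mul_pow_le_div_one_sub ht.le hμe _
    _ = e / (1 - (μ + e)) * r ^ ∑ i, k i := by
        field_simp

end JordanBlock

open MvPolynomial in
theorem stmt19_general (n : ℕ) (μ : ℝ) (hμ0 : 0 ≤ μ) :
    ∃ Ctilde : ℝ, ∀ (lam : Fin (n + 1) → ℂ), (∀ i, ‖lam i‖ = μ) →
      ∀ (r : ℝ), 0 < r →
      ∀ (ε : ℝ), 0 < ε → ε < (1 - μ) / 2 →
      ∀ (a : (Fin (n + 1) →₀ ℕ) → ℂ),
        (∀ α : Fin (n + 1) →₀ ℕ, (∑ i, α i) < 2 → a α = 0) →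
        Summable (fun α : Fin (n + 1) →₀ ℕ => ‖a α‖ * r ^ (∑ i, α i)) →
      ∀ (b : (Fin (n + 1) →₀ ℕ) → ℂ),
        (∀ β : Fin (n + 1) →₀ ℕ,
          HasSum (fun α : Fin (n + 1) →₀ ℕ => a α *
            MvPolynomial.coeff β
              ((∏ l : Fin n, (C (lam l.castSucc) * X l.castSucc +
                  C (ε : ℂ) * X l.succ) ^ α l.castSucc) *
                (C (lam (Fin.last n)) * X (Fin.last n)) ^ α (Fin.last n)
              - ∏ i : Fin (n + 1), (C (lam i) * X i) ^ α i)) (b β)) →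
        (∑' β : Fin (n + 1) →₀ ℕ, ‖b β‖ * r ^ (∑ i, β i))
          ≤ ε * Ctilde * ∑' α : Fin (n + 1) →₀ ℕ, ‖a α‖ * r ^ (∑ i, α i) := by
  refine ⟨2 / (1 - μ), fun lam hlam r hr ε hε hεμ a _ ha b hb => ?_⟩
  have hconst : ε / (1 - (μ + ε)) ≤ ε * (2 / (1 - μ)) := by
    rw [mul_div_assoc', div_le_div_iff₀ (by linarith) (by linarith)]
    nlinarith
  simp only [← Finsupp.degree_eq_sum] at ha ⊢
  refine (tsum_norm_mul_pow_degree_le_of_hasSum hr hb (ha.mul_left _) fun α => ?_).trans_eq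
    tsum_mul_left
  rw [← prod_jordanSubst_pow, mul_left_comm, Finsupp.degree_eq_sum]
  gcongr
  refine (majorantNorm_prod_jordanSubst_pow_sub_le_uniform hr.le hμ0 hε (by linarith)
    (fun i => (hlam i).le) (by simp [abs_of_pos hε]) α).trans ?_
  gcongr

open MvPolynomial in
/-- Estimate of the remainder operator in the majorant polydisc norm.
`φ` is a holomorphic germ vanishing to order `≥ 2`, given by its Taylor
coefficients `a`, on which a single Jordan block `Λ + εN` acts, all of whose
eigenvalues have modulus `μ < 1`.  The coefficients `b` of
`φ∘(Λ + εN) - φ∘Λ` satisfy `|φ∘(Λ+εN) - φ∘Λ|_r ≤ ε * C̃ * |φ|_r` where `C̃`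
depends only on `n` and `μ` (not on `r`, `ε` or `φ`). -/
theorem stmt19 (n : ℕ) (μ : ℝ) (hμ0 : 0 ≤ μ) (hμ1 : μ < 1) :
    ∃ Ctilde : ℝ, ∀ (lam : Fin (n + 1) → ℂ), (∀ i, ‖lam i‖ = μ) →
      ∀ (r : ℝ), 0 < r →
      ∀ (ε : ℝ), 0 < ε → ε < (1 - μ) / 2 →
      ∀ (a : (Fin (n + 1) →₀ ℕ) → ℂ),
        (∀ α : Fin (n + 1) →₀ ℕ, (∑ i, α i) < 2 → a α = 0) →
        Summable (fun α : Fin (n + 1) →₀ ℕ => ‖a α‖ * r ^ (∑ i, α i)) →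
      ∀ (b : (Fin (n + 1) →₀ ℕ) → ℂ),
        (∀ β : Fin (n + 1) →₀ ℕ,
          HasSum (fun α : Fin (n + 1) →₀ ℕ => a α *
            MvPolynomial.coeff β
              ((∏ l : Fin n, (C (lam l.castSucc) * X l.castSucc +
                  C (ε : ℂ) * X l.succ) ^ α l.castSucc) *
                (C (lam (Fin.last n)) * X (Fin.last n)) ^ α (Fin.last n)
              - ∏ i : Fin (n + 1), (C (lam i) * X i) ^ α i)) (b β)) →
        (∑' β : Fin (n + 1) →₀ ℕ, ‖b β‖ * r ^ (∑ i, β i))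
          ≤ ε * Ctilde * ∑' α : Fin (n + 1) →₀ ℕ, ‖a α‖ * r ^ (∑ i, α i) :=
  stmt19_general n μ hμ0
end
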